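/- arXiv:0805.4345 — 2 statements merged into one kernel-verified Lean document; each statement's English description precedes it below -/
import Mathlib

section
/- Let ψ : Fin m × Fin n → ℂ be a unit vector (∑_{a,b} |ψ(a,b)|² = 1) representing a pure state of a bipartite system, and let M be the m×n complex matrix with entries M_{ab} = ψ(a,b), so that the reduced density matrix of the first subsystem is ρ_A = M Mᴴ. Then Tr((M Mᴴ)²) = 1 if and only if ψ is a product state, i.e., there exist vectors u : Fin m → ℂ and v : Fin n → ℂ with ψ(a,b) = u(a) · v(b) for all a, b. Equivalently, the General Entanglement E_g(ψ) = 2 − 2·Tr((M Mᴴ)²) vanishes if and only if ψ is completely separable. -/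
/-!
Write `rᵢ` for the rows of `M`, so that `(M Mᴴ)ᵢⱼ = ⟪rⱼ, rᵢ⟫` and the purity is
`∑ᵢⱼ |⟪rᵢ, rⱼ⟫|²`. By Cauchy–Schwarz each term is at most `‖rᵢ‖²‖rⱼ‖²`, and these bounds add up
to `(∑ᵢ ‖rᵢ‖²)² = 1`. Hence the purity is `1` exactly when Cauchy–Schwarz is an equality for
every pair of rows, i.e. when all rows are multiples of one vector `v`: `M a b = u a * v b`.
-/

open Matrix BigOperators

open scoped InnerProductSpace

section InnerProductSpace

variable {𝕜 E ι : Type*} [RCLike 𝕜] [NormedAddCommGroup E] [InnerProductSpace 𝕜 E]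

theorem forall_norm_inner_eq_mul_norm_iff_exists_smul {r : ι → E} :
    (∀ a c, ‖⟪r a, r c⟫_𝕜‖ = ‖r a‖ * ‖r c‖) ↔ ∃ (w : E) (t : ι → 𝕜), ∀ a, r a = t a • w := by
  constructor
  · intro hr
    by_cases hzero : ∀ a, r a = 0
    · exact ⟨0, 0, fun a => by simp [hzero a]⟩
    obtain ⟨a₀, ha₀⟩ := not_forall.mp hzero
    have hmul : ∀ a, ∃ t : 𝕜, r a = t • r a₀ := by
      intro a
      by_cases ha : r a = 0
      · exact ⟨0, by simp [ha]⟩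
      · obtain ⟨t, -, ht⟩ := (norm_inner_eq_norm_iff ha₀ ha).mp (hr a₀ a)
        exact ⟨t, ht⟩
    choose t ht using hmul
    exact ⟨r a₀, t, ht⟩
  · rintro ⟨w, t, hr⟩ a c
    simp only [hr, inner_smul_left, inner_smul_right, inner_self_eq_norm_sq_to_K, norm_mul,
      norm_smul, RCLike.norm_conj, norm_pow, RCLike.norm_ofReal, abs_norm]
    ring

theorem sum_norm_inner_sq_eq_iff [Fintype ι] (r : ι → E) :
    ∑ a, ∑ c, ‖⟪r a, r c⟫_𝕜‖ ^ 2 = (∑ a, ‖r a‖ ^ 2) ^ 2 ↔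
      ∀ a c, ‖⟪r a, r c⟫_𝕜‖ = ‖r a‖ * ‖r c‖ := by
  have hsq : (∑ a, ‖r a‖ ^ 2) ^ 2 = ∑ a, ∑ c, (‖r a‖ * ‖r c‖) ^ 2 := by
    simp only [sq (∑ a, _), Finset.sum_mul_sum, mul_pow]
  have hle : ∀ p ∈ (Finset.univ : Finset (ι × ι)),
      ‖⟪r p.1, r p.2⟫_𝕜‖ ^ 2 ≤ (‖r p.1‖ * ‖r p.2‖) ^ 2 :=
    fun p _ => pow_le_pow_left₀ (norm_nonneg _) (norm_inner_le_norm _ _) 2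
  rw [hsq, ← Fintype.sum_prod_type', ← Fintype.sum_prod_type', Finset.sum_eq_sum_iff_of_le hle]
  simp only [Finset.mem_univ, true_implies, Prod.forall]
  exact forall₂_congr fun a c => sq_eq_sq₀ (norm_nonneg _) (by positivity)

end InnerProductSpace

namespace Matrix

variable {𝕜 m n : Type*} [RCLike 𝕜] [Fintype n]

theorem mul_conjTranspose_self_apply_eq_inner (M : Matrix m n 𝕜) (a c : m) :
    (M * Mᴴ) a c = ⟪WithLp.toLp 2 (M c), WithLp.toLp 2 (M a)⟫_𝕜 := by
  simp [EuclideanSpace.inner_toLp_toLp, mul_apply, dotProduct]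

variable [Fintype m]

theorem trace_mul_conjTranspose_self_eq_sum_norm_sq (A : Matrix m n 𝕜) :
    (A * Aᴴ).trace = ((∑ a, ∑ b, ‖A a b‖ ^ 2 : ℝ) : 𝕜) := by
  simp [trace, mul_apply, RCLike.mul_conj]

theorem trace_mul_conjTranspose_self_sq_eq_sum_norm_inner_sq (M : Matrix m n 𝕜) :
    (M * Mᴴ * (M * Mᴴ)).trace =
      ((∑ a, ∑ c, ‖⟪WithLp.toLp 2 (M a), WithLp.toLp 2 (M c)⟫_𝕜‖ ^ 2 : ℝ) : 𝕜) := by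
  calc (M * Mᴴ * (M * Mᴴ)).trace = (M * Mᴴ * (M * Mᴴ)ᴴ).trace := by
        rw [(isHermitian_mul_conjTranspose_self M).eq]
    _ = _ := by
      simp only [trace_mul_conjTranspose_self_eq_sum_norm_sq,
        mul_conjTranspose_self_apply_eq_inner, norm_inner_symm]

theorem trace_mul_conjTranspose_self_sq_eq_one_iff (M : Matrix m n 𝕜)
    (hM : ∑ a, ∑ b, ‖M a b‖ ^ 2 = 1) :
    (M * Mᴴ * (M * Mᴴ)).trace = 1 ↔ ∃ (u : m → 𝕜) (v : n → 𝕜), ∀ a b, M a b = u a * v b := by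
  have hrows : (∑ a, ‖WithLp.toLp 2 (M a)‖ ^ 2) ^ 2 = 1 := by
    simp [EuclideanSpace.norm_sq_eq, hM]
  rw [trace_mul_conjTranspose_self_sq_eq_sum_norm_inner_sq, ← RCLike.ofReal_one,
    RCLike.ofReal_inj, ← hrows, sum_norm_inner_sq_eq_iff,
    forall_norm_inner_eq_mul_norm_iff_exists_smul]
  constructor
  · rintro ⟨w, t, hrow⟩
    exact ⟨t, w, fun a b => by simpa using congrArg (· b) (hrow a)⟩
  · rintro ⟨u, v, huv⟩
    exact ⟨WithLp.toLp 2 v, u, fun a => by ext b; simp [huv]⟩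

end Matrix

/-- **Discriminance of General Entanglement for a bipartite pure state.**
For a unit vector `ψ` of a bipartite system with associated matrix `M`, the
purity `Tr((M Mᴴ)²)` of the reduced state equals `1` iff `ψ` is a product
state; equivalently the General Entanglement `E_g = 2 − 2 Tr((M Mᴴ)²)`
vanishes iff `ψ` is completely separable. -/
theorem purity_eq_one_iff_product_state
    (m n : ℕ)
    (ψ : Fin m × Fin n → ℂ) (hψ : ∑ q, ‖ψ q‖ ^ 2 = 1)
    (M : Matrix (Fin m) (Fin n) ℂ) (hM : ∀ a b, M a b = ψ (a, b)) :
    (((M * M.conjTranspose) * (M * M.conjTranspose)).trace = 1 ↔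
      ∃ (u : Fin m → ℂ) (v : Fin n → ℂ), ∀ a b, ψ (a, b) = u a * v b) ∧
    (2 - 2 * ((M * M.conjTranspose) * (M * M.conjTranspose)).trace = 0 ↔
      ∃ (u : Fin m → ℂ) (v : Fin n → ℂ), ∀ a b, ψ (a, b) = u a * v b) := by
  obtain rfl : ψ = fun q => M q.1 q.2 := funext fun q => (hM q.1 q.2).symm
  have hpurity :=
    M.trace_mul_conjTranspose_self_sq_eq_one_iff (by rwa [Fintype.sum_prod_type] at hψ)
  refine ⟨hpurity, Iff.trans ?_ hpurity⟩
  constructor <;> intro h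
  · linear_combination (-1 / 2 : ℂ) * h
  · linear_combination (-2 : ℂ) * h
end

section
/- Let ψ : Fin m × Fin n → ℂ be a unit vector with associated m×n matrix M_{ab} = ψ(a,b), and let U be an m×m unitary matrix and V an n×n unitary matrix. The locally transformed state (U ⊗ V)ψ has associated matrix M' = U M Vᵀ, and the purity of the reduced state is invariant: Tr((M' M'ᴴ)²) = Tr((M Mᴴ)²). Consequently the General Entanglement of a bipartite pure state is invariant under local unitary operations. -/
open Matrix

/-! Writing `M` for the coefficient matrix of the state, the local operation acts as
`M ↦ U M Vᵀ`. The unitary `Vᵀ` cancels in the reduced density matrix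
`(U M Vᵀ)(U M Vᵀ)ᴴ = U (M Mᴴ) Uᴴ`, and conjugation by the unitary `U` is multiplicative and
preserves traces, so `Tr(ρ²)` is unchanged. -/

namespace Matrix

variable {R : Type*} {m n : Type*} [Fintype n]

theorem mul_mul_transpose_apply [Fintype m] [CommSemiring R] (U : Matrix m m R)
    (M : Matrix m n R) (V : Matrix n n R) (a : m) (b : n) :
    (U * M * Vᵀ) a b = ∑ a', ∑ b', U a a' * V b b' * M a' b' := by
  simp only [mul_apply, transpose_apply, Finset.sum_mul]
  rw [Finset.sum_comm]
  exact Finset.sum_congr rfl fun _ _ => Finset.sum_congr rfl fun _ _ => by ring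

def reducedDensityMatrix [Mul R] [AddCommMonoid R] [Star R] (M : Matrix m n R) :
    Matrix m m R :=
  M * Mᴴ

def purity [Fintype m] [Mul R] [AddCommMonoid R] [Star R] (M : Matrix m n R) : R :=
  trace (reducedDensityMatrix M * reducedDensityMatrix M)

variable [DecidableEq n] [CommRing R] [StarRing R]

theorem reducedDensityMatrix_mul_unitary (M : Matrix m n R)
    {W : Matrix n n R} (hW : W ∈ unitaryGroup n R) :
    reducedDensityMatrix (M * W) = reducedDensityMatrix M := by
  simp only [reducedDensityMatrix, conjTranspose_mul, Matrix.mul_assoc,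
    ← Matrix.mul_assoc W, ← star_eq_conjTranspose, Unitary.mul_star_self_of_mem hW,
    Matrix.one_mul]

theorem reducedDensityMatrix_mul_mul_transpose [Fintype m] (U : Matrix m m R)
    (M : Matrix m n R) {V : Matrix n n R} (hV : V ∈ unitaryGroup n R) :
    reducedDensityMatrix (U * M * Vᵀ) = U * reducedDensityMatrix M * star U := by
  rw [reducedDensityMatrix_mul_unitary _ (transpose_mem_unitaryGroup_iff.mpr hV),
    reducedDensityMatrix, reducedDensityMatrix, conjTranspose_mul, star_eq_conjTranspose]
  simp only [Matrix.mul_assoc]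

theorem trace_unitary_conj_mul_unitary_conj [Fintype m] [DecidableEq m] {U : Matrix m m R}
    (hU : U ∈ unitaryGroup m R) (A B : Matrix m m R) :
    trace (U * A * star U * (U * B * star U)) = trace (A * B) := by
  have hconj : U * A * star U * (U * B * star U) = U * (A * B) * star U := by
    simp only [Matrix.mul_assoc, ← Matrix.mul_assoc (star U) U, Unitary.star_mul_self_of_mem hU,
      Matrix.one_mul]
  rw [hconj, trace_mul_cycle, Unitary.star_mul_self_of_mem hU, Matrix.one_mul]

theorem purity_mul_mul_transpose [Fintype m] [DecidableEq m] {U : Matrix m m R}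
    (hU : U ∈ unitaryGroup m R) (M : Matrix m n R) {V : Matrix n n R}
    (hV : V ∈ unitaryGroup n R) :
    purity (U * M * Vᵀ) = purity M := by
  rw [purity, reducedDensityMatrix_mul_mul_transpose U M hV,
    trace_unitary_conj_mul_unitary_conj hU, purity]

end Matrix

theorem purity_invariant_local_unitary_general
    (m n : ℕ)
    (ψ : Fin m × Fin n → ℂ)
    (M : Matrix (Fin m) (Fin n) ℂ) (hM : ∀ a b, M a b = ψ (a, b))
    (U : Matrix (Fin m) (Fin m) ℂ) (hU : U ∈ Matrix.unitaryGroup (Fin m) ℂ)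
    (V : Matrix (Fin n) (Fin n) ℂ) (hV : V ∈ Matrix.unitaryGroup (Fin n) ℂ)
    (ψ' : Fin m × Fin n → ℂ)
    (hψ' : ∀ a b, ψ' (a, b) = ∑ a', ∑ b', U a a' * V b b' * ψ (a', b'))
    (M' : Matrix (Fin m) (Fin n) ℂ) (hM' : ∀ a b, M' a b = ψ' (a, b)) :
    M' = U * M * V.transpose ∧
      ((M' * M'.conjTranspose) * (M' * M'.conjTranspose)).trace
        = ((M * M.conjTranspose) * (M * M.conjTranspose)).trace := by
  have hM'_eq : M' = U * M * V.transpose := by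
    ext a b
    simp only [hM', hψ', mul_mul_transpose_apply, hM]
  exact ⟨hM'_eq, hM'_eq ▸ purity_mul_mul_transpose hU M hV⟩

/-- **Invariance of General Entanglement under local unitaries** (bipartite
case). The locally transformed state `(U ⊗ V) ψ` has associated matrix
`M' = U M Vᵀ`, and the purity of the reduced state is invariant:
`Tr((M' M'ᴴ)²) = Tr((M Mᴴ)²)`. -/
theorem purity_invariant_local_unitary
    (m n : ℕ)
    (ψ : Fin m × Fin n → ℂ) (hψ : ∑ q, ‖ψ q‖ ^ 2 = 1)
    (M : Matrix (Fin m) (Fin n) ℂ) (hM : ∀ a b, M a b = ψ (a, b))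
    (U : Matrix (Fin m) (Fin m) ℂ) (hU : U ∈ Matrix.unitaryGroup (Fin m) ℂ)
    (V : Matrix (Fin n) (Fin n) ℂ) (hV : V ∈ Matrix.unitaryGroup (Fin n) ℂ)
    (ψ' : Fin m × Fin n → ℂ)
    (hψ' : ∀ a b, ψ' (a, b) = ∑ a', ∑ b', U a a' * V b b' * ψ (a', b'))
    (M' : Matrix (Fin m) (Fin n) ℂ) (hM' : ∀ a b, M' a b = ψ' (a, b)) :
    M' = U * M * V.transpose ∧
      ((M' * M'.conjTranspose) * (M' * M'.conjTranspose)).trace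
        = ((M * M.conjTranspose) * (M * M.conjTranspose)).trace :=
  purity_invariant_local_unitary_general m n ψ M hM U hU V hV ψ' hψ' M' hM'
end
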